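/- Fix d ≥ 1, a balanced C ∈ {0,1}^{2d}, A ∈ {0,1}^{2d}, x_test ∈ σ0(C) and x_fool ∈ σ1(C), and define C̄, Ā, h1, h2, h3, h4 as in the context. Then: h1(s) = h2(s) and h3(s) = h4(s) for every s ∈ σ0(C) \ {x_test}; moreover h1(x_test) = (0, A) ≠ (1, C̄⊕A) = h2(x_test), and h3(x_test) = (0, Ā) ≠ (1, C⊕A) = h4(x_test). -/

import Mathlib

open scoped Classical

noncomputable section

/-- Binary strings of length `d`, i.e. elements of `{0,1}^d`. -/
abbrev BStr (d : ℕ) := Fin d → Bool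

/-- Entrywise XOR of two binary strings. -/
def bxor {d : ℕ} (A B : BStr d) : BStr d := fun i => xor (A i) (B i)

/-- `σ₀(C)`: the positions at which `C` takes the value `0`. -/
def sigma0 {d : ℕ} (C : BStr d) : Finset (Fin d) := Finset.univ.filter fun i => C i = false

/-- `σ₁(C)`: the positions at which `C` takes the value `1`. -/
def sigma1 {d : ℕ} (C : BStr d) : Finset (Fin d) := Finset.univ.filter fun i => C i = true

/-- A binary string is balanced if it has as many `0`-entries as `1`-entries. -/
def BalancedStr {d : ℕ} (C : BStr d) : Prop := (sigma0 C).card = (sigma1 C).card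

/-- The label space `Y = {0,1} × {0,1}^*`. -/
abbrev Label : Type := Bool × List Bool

/-- The hypothesis `h_{A,B} : ℕ → Y`, mapping `x` to `(0, A)` if `(A ⊕ B)(x mod d) = 0`
and to `(1, B)` if `(A ⊕ B)(x mod d) = 1`. -/
def hyp {d : ℕ} (A B : BStr d) : ℕ → Label := fun x =>
  if hd : 0 < d then
    if bxor A B ⟨x % d, Nat.mod_lt x hd⟩ = true then (true, List.ofFn B)
    else (false, List.ofFn A)
  else (false, List.ofFn A)

/-- The secret-sharing hypothesis class `H_OTP`. -/
def HOTP : Set (ℕ → Label) :=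
  { h | ∃ (d : ℕ) (A B : BStr d), 1 ≤ d ∧ BalancedStr (bxor A B) ∧ h = hyp A B }

/-- The training sequence obtained by labeling the points of `S` by `h` and removing
the `i`-th (labeled) point. -/
def trainSeq {X Y : Type*} {n : ℕ} (S : Fin n → X) (h : X → Y) (i : Fin n) :
    List (X × Y) :=
  (List.ofFn fun j => (S j, h (S j))).eraseIdx i

/-- The transductive error `L^T_{S,h}(Alg)` of the learner `Alg` on the instance `(S, h)`. -/
def transErr {X Y : Type*} {n : ℕ} (Alg : List (X × Y) → X → Y) (S : Fin n → X)
    (h : X → Y) : ℝ :=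
  (∑ i : Fin n, if Alg (trainSeq S h i) (S i) = h (S i) then (0 : ℝ) else 1) / n

/-- `Alg` is a transductive learner for the class `H`. -/
def TransLearner {X Y : Type*} (H : Set (X → Y)) (Alg : List (X × Y) → X → Y) : Prop :=
  ∃ m : ℝ → ℕ, ∀ ε : ℝ, 0 < ε → ε < 1 → ∀ h ∈ H, ∀ (n : ℕ) (S : Fin n → X),
    m ε ≤ n → transErr Alg S h ≤ ε

/-- The class `H` is transductively learnable. -/
def TransLearnable {X Y : Type*} (H : Set (X → Y)) : Prop :=
  ∃ Alg : List (X × Y) → X → Y, TransLearner H Alg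

/-- The empirical risk `L_S(h)`: the fraction of examples in `S` mislabeled by `h`. -/
def empRisk {X Y : Type*} (S : List (X × Y)) (h : X → Y) : ℝ :=
  ((S.map fun p => if h p.1 = p.2 then (0 : ℝ) else 1).sum) / S.length

/-- The learner `Alg` is induced by the local regularizer `ψ : H × X → ℝ≥0`: whenever
the argmin set `M(S,x)` of `ψ(·, x)` over zero-empirical-risk hypotheses is nonempty,
`Alg S x` agrees with some hypothesis in `M(S,x)` at `x`. -/
def InducedBy {X Y : Type*} (H : Set (X → Y)) (ψ : H → X → NNReal)
    (Alg : List (X × Y) → X → Y) : Prop :=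
  ∀ (S : List (X × Y)) (x : X),
    (∃ h : H, empRisk S h.1 = 0 ∧ ∀ g : H, empRisk S g.1 = 0 → ψ h x ≤ ψ g x) →
    ∃ h : H, empRisk S h.1 = 0 ∧ (∀ g : H, empRisk S g.1 = 0 → ψ h x ≤ ψ g x) ∧
      Alg S x = h.1 x

/-- A local regularizer is locally injective if `ψ(·, x)` is injective for every `x`. -/
def LocallyInjective {X Y : Type*} (H : Set (X → Y)) (ψ : H → X → NNReal) : Prop :=
  ∀ x : X, Function.Injective fun h : H => ψ h x

/-- A class is generalized binary if each of its hypotheses has image of size at most 2. -/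
def GeneralizedBinary {X Y : Type*} (H : Set (X → Y)) : Prop :=
  ∀ h ∈ H, ∃ y₁ y₂ : Y, ∀ x : X, h x = y₁ ∨ h x = y₂

/-- A class has distinct label sets if `im` is injective on it. -/
def DistinctLabelSets {X Y : Type*} (H : Set (X → Y)) : Prop :=
  ∀ h ∈ H, ∀ h' ∈ H, Set.range h = Set.range h' → h = h'

/-- A class is GBDLS if it is generalized binary and has distinct label sets. -/
def GBDLS {X Y : Type*} (H : Set (X → Y)) : Prop :=
  GeneralizedBinary H ∧ DistinctLabelSets H

/-- `e(i)`: the standard basis string, with a single `1` in position `i`. -/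
def evec {d : ℕ} (i : Fin d) : BStr d := fun j => decide (j = i)

/-- `C ⊕ e(x) ⊕ e(x')`: the string `C` with its `x`-th and `x'`-th entries flipped. -/
def flip2 {d : ℕ} (C : BStr d) (x x' : Fin d) : BStr d := bxor (bxor C (evec x)) (evec x')

/-- The training sequence consisting of the examples `(s, h s)` for `s ∈ S`
(listed in increasing order). -/
def trainOn {d : ℕ} (S : Finset (Fin d)) (h : ℕ → Label) : List (ℕ × Label) :=
  (S.sort (· ≤ ·)).map fun s => ((s : ℕ), h (s : ℕ))

/-! At a position `s`, the hypothesis `h_{A, C ⊕ A}` reads off the bit `C s`: it answers `(0, A)`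
when `C s = 0` and `(1, C ⊕ A)` when `C s = 1`. Passing from `C` to `C̄` flips `C` exactly at
`x_test` (from `0` to `1`) and at `x_fool`, and flipping `A` at the same two positions leaves
`C̄ ⊕ Ā = C ⊕ A`. -/

section

variable {d : ℕ}

lemma mem_sigma0 {C : BStr d} {i : Fin d} : i ∈ sigma0 C ↔ C i = false := by
  simp [sigma0]

lemma mem_sigma1 {C : BStr d} {i : Fin d} : i ∈ sigma1 C ↔ C i = true := by
  simp [sigma1]

lemma hyp_apply_fin (A B : BStr d) (s : Fin d) :
    hyp A B s = if bxor A B s = true then (true, List.ofFn B) else (false, List.ofFn A) := by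
  simp only [hyp, dif_pos s.pos, Nat.mod_eq_of_lt s.isLt, Fin.eta]

lemma bxor_bxor_cancel_left (A C : BStr d) : bxor A (bxor C A) = C := by
  funext i
  simp only [bxor]
  cases A i <;> cases C i <;> rfl

lemma hyp_bxor_of_eq_false {C : BStr d} (A : BStr d) {s : Fin d} (hs : C s = false) :
    hyp A (bxor C A) s = (false, List.ofFn A) := by
  simp [hyp_apply_fin, bxor_bxor_cancel_left, hs]

lemma hyp_bxor_of_eq_true {C : BStr d} (A : BStr d) {s : Fin d} (hs : C s = true) :
    hyp A (bxor C A) s = (true, List.ofFn (bxor C A)) := by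
  simp [hyp_apply_fin, bxor_bxor_cancel_left, hs]

lemma flip2_apply_of_ne (C : BStr d) {x x' s : Fin d} (hx : s ≠ x) (hx' : s ≠ x') :
    flip2 C x x' s = C s := by
  simp [flip2, bxor, evec, hx, hx']

lemma flip2_apply_left (C : BStr d) {x x' : Fin d} (h : x ≠ x') :
    flip2 C x x' x = !C x := by
  simp [flip2, bxor, evec, h]

lemma bxor_flip2_flip2 (C A : BStr d) (x x' : Fin d) :
    bxor (flip2 C x x') (flip2 A x x') = bxor C A := by
  funext i
  simp only [flip2, bxor]
  cases C i <;> cases A i <;> cases evec x i <;> cases evec x' i <;> rfl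

end

theorem statement12_general (d : ℕ) (C A : BStr (2 * d))
    (xt xf : Fin (2 * d)) (hxt : xt ∈ sigma0 C) (hxf : xf ∈ sigma1 C) :
    (∀ s ∈ sigma0 C, s ≠ xt →
        hyp A (bxor C A) s = hyp A (bxor (flip2 C xt xf) A) s ∧
        hyp (flip2 A xt xf) (bxor C (flip2 A xt xf)) s
          = hyp (flip2 A xt xf) (bxor (flip2 C xt xf) (flip2 A xt xf)) s) ∧
    hyp A (bxor C A) xt = (false, List.ofFn A) ∧
    hyp A (bxor (flip2 C xt xf) A) xt = (true, List.ofFn (bxor (flip2 C xt xf) A)) ∧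
    hyp A (bxor C A) xt ≠ hyp A (bxor (flip2 C xt xf) A) xt ∧
    hyp (flip2 A xt xf) (bxor C (flip2 A xt xf)) xt
      = (false, List.ofFn (flip2 A xt xf)) ∧
    hyp (flip2 A xt xf) (bxor (flip2 C xt xf) (flip2 A xt xf)) xt
      = (true, List.ofFn (bxor C A)) ∧
    hyp (flip2 A xt xf) (bxor C (flip2 A xt xf)) xt
      ≠ hyp (flip2 A xt xf) (bxor (flip2 C xt xf) (flip2 A xt xf)) xt := by
  rw [mem_sigma0] at hxt
  rw [mem_sigma1] at hxf
  have hne : xt ≠ xf := by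
    rintro rfl
    simp [hxt] at hxf
  have hCbar_xt : flip2 C xt xf xt = true := by simp [flip2_apply_left C hne, hxt]
  refine ⟨fun s hs hsxt => ?_, hyp_bxor_of_eq_false _ hxt, hyp_bxor_of_eq_true _ hCbar_xt, ?_,
    hyp_bxor_of_eq_false _ hxt, by rw [hyp_bxor_of_eq_true _ hCbar_xt, bxor_flip2_flip2], ?_⟩
  · rw [mem_sigma0] at hs
    have hsxf : s ≠ xf := by
      rintro rfl
      simp [hs] at hxf
    have hCbar_s : flip2 C xt xf s = false := by rw [flip2_apply_of_ne C hsxt hsxf, hs]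
    simp only [hyp_bxor_of_eq_false _ hs, hyp_bxor_of_eq_false _ hCbar_s, and_self]
  all_goals simp [hyp_bxor_of_eq_false _ hxt, hyp_bxor_of_eq_true _ hCbar_xt]

/-- with `C̄ = C ⊕ e(x_test) ⊕ e(x_fool)` and `Ā = A ⊕ e(x_test) ⊕ e(x_fool)`,
the hypotheses `h1 = h_{A,C⊕A}`, `h2 = h_{A,C̄⊕A}`, `h3 = h_{Ā,C⊕Ā}`, `h4 = h_{Ā,C̄⊕Ā}`
satisfy `h1 = h2` and `h3 = h4` on `σ₀(C) \ {x_test}`, while `h1(x_test) = (0,A) ≠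
(1,C̄⊕A) = h2(x_test)` and `h3(x_test) = (0,Ā) ≠ (1,C⊕A) = h4(x_test)`. -/
theorem statement12 (d : ℕ) (hd : 1 ≤ d) (C A : BStr (2 * d)) (hC : BalancedStr C)
    (xt xf : Fin (2 * d)) (hxt : xt ∈ sigma0 C) (hxf : xf ∈ sigma1 C) :
    (∀ s ∈ sigma0 C, s ≠ xt →
        hyp A (bxor C A) s = hyp A (bxor (flip2 C xt xf) A) s ∧
        hyp (flip2 A xt xf) (bxor C (flip2 A xt xf)) s
          = hyp (flip2 A xt xf) (bxor (flip2 C xt xf) (flip2 A xt xf)) s) ∧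
    hyp A (bxor C A) xt = (false, List.ofFn A) ∧
    hyp A (bxor (flip2 C xt xf) A) xt = (true, List.ofFn (bxor (flip2 C xt xf) A)) ∧
    hyp A (bxor C A) xt ≠ hyp A (bxor (flip2 C xt xf) A) xt ∧
    hyp (flip2 A xt xf) (bxor C (flip2 A xt xf)) xt
      = (false, List.ofFn (flip2 A xt xf)) ∧
    hyp (flip2 A xt xf) (bxor (flip2 C xt xf) (flip2 A xt xf)) xt
      = (true, List.ofFn (bxor C A)) ∧
    hyp (flip2 A xt xf) (bxor C (flip2 A xt xf)) xt
      ≠ hyp (flip2 A xt xf) (bxor (flip2 C xt xf) (flip2 A xt xf)) xt :=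
  statement12_general d C A xt xf hxt hxf
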